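/- arXiv:1509.05903 — 3 statements merged into one kernel-verified Lean document; each statement's English description precedes it below -/
import Mathlib

section
/- Tomihisa's identity: for any five elements f1, f2, f3, f4, f5 of the Lie algebra sl(2,R) (traceless real 2×2 matrices with the commutator bracket), one has [f1,[[f2,f3],[f4,f5]]] + [f3,[[f2,f5],[f4,f1]]] + [f5,[[f2,f1],[f4,f3]]] = 0. -/
set_option maxHeartbeats 2000000


theorem tomihisa_identity_sl2_real
    (f₁ f₂ f₃ f₄ f₅ : Matrix (Fin 2) (Fin 2) ℝ)
    (h₁ : Matrix.trace f₁ = 0) (h₂ : Matrix.trace f₂ = 0) (h₃ : Matrix.trace f₃ = 0)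
    (h₄ : Matrix.trace f₄ = 0) (h₅ : Matrix.trace f₅ = 0) :
    let br : Matrix (Fin 2) (Fin 2) ℝ → Matrix (Fin 2) (Fin 2) ℝ → Matrix (Fin 2) (Fin 2) ℝ :=
      fun A B => A * B - B * A
    br f₁ (br (br f₂ f₃) (br f₄ f₅)) + br f₃ (br (br f₂ f₅) (br f₄ f₁))
      + br f₅ (br (br f₂ f₁) (br f₄ f₃)) = 0 := by
  intro br
  simp only [Matrix.trace, Fin.sum_univ_two, Matrix.diag] at h₁ h₂ h₃ h₄ h₅
  have e₁ : f₁ 1 1 = -(f₁ 0 0) := by linarith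
  have e₂ : f₂ 1 1 = -(f₂ 0 0) := by linarith
  have e₃ : f₃ 1 1 = -(f₃ 0 0) := by linarith
  have e₄ : f₄ 1 1 = -(f₄ 0 0) := by linarith
  have e₅ : f₅ 1 1 = -(f₅ 0 0) := by linarith
  ext i j
  fin_cases i <;> fin_cases j <;>
    · simp only [br, Matrix.sub_apply, Matrix.add_apply, Matrix.mul_apply,
        Fin.sum_univ_two, Matrix.zero_apply, Fin.isValue, Fin.mk_zero, Fin.mk_one,
        e₁, e₂, e₃, e₄, e₅]
      ring
end

section
/- Skewer Petersen–Morley theorem, algebraic form: for any three traceless 2×2 complex matrices a, b, c, the three matrices [[a,b],c], [[b,c],a], [[c,a],b] are linearly dependent over C. -/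
theorem skewer_petersen_morley
    (a b c : Matrix (Fin 2) (Fin 2) ℂ)
    (ha : Matrix.trace a = 0) (hb : Matrix.trace b = 0) (hc : Matrix.trace c = 0) :
    let br : Matrix (Fin 2) (Fin 2) ℂ → Matrix (Fin 2) (Fin 2) ℂ → Matrix (Fin 2) (Fin 2) ℂ :=
      fun X Y => X * Y - Y * X
    ¬ LinearIndependent ℂ ![br (br a b) c, br (br b c) a, br (br c a) b] := by
  intro br h
  rw [Fintype.linearIndependent_iff] at h
  have := h (fun _ => 1) ?_ 0
  · exact one_ne_zero this
  · simp [Fin.sum_univ_three, br]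
    noncomm_ring
end

section
/- Skewer Desargues theorem, algebraic form: let a1,a2,a3,b1,b2,b3 be traceless 2×2 complex matrices such that [a1,b1], [a2,b2], [a3,b3] are linearly dependent. Then [[a1,a2],[b1,b2]], [[a1,a3],[b1,b3]], [[a2,a3],[b2,b3]] are linearly dependent. -/
private noncomputable def comm2 (X Y : Matrix (Fin 2) (Fin 2) ℂ) : Matrix (Fin 2) (Fin 2) ℂ :=
  X * Y - Y * X

private noncomputable def rowsOf (X Y Z : Matrix (Fin 2) (Fin 2) ℂ) : Matrix (Fin 3) (Fin 3) ℂ :=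
  !![X 0 0, X 0 1, X 1 0; Y 0 0, Y 0 1, Y 1 0; Z 0 0, Z 0 1, Z 1 0]

private lemma rows_det_zero_of_dep (X Y Z : Matrix (Fin 2) (Fin 2) ℂ)
    (h : ¬ LinearIndependent ℂ ![X, Y, Z]) : (rowsOf X Y Z).det = 0 := by
  obtain ⟨g, hsum, i, hgi⟩ := Fintype.not_linearIndependent_iff.mp h
  simp only [Fin.sum_univ_three, Matrix.cons_val_zero, Matrix.cons_val_one,
    Matrix.head_cons, Matrix.cons_val_two, Matrix.tail_cons] at hsum
  refine Matrix.exists_vecMul_eq_zero_iff.mp ⟨g, fun h0 => hgi (by simp [h0]), ?_⟩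
  have h00 : (g 0 • X + g 1 • Y + g 2 • Z) 0 0 = 0 := by rw [hsum]; rfl
  have h01 : (g 0 • X + g 1 • Y + g 2 • Z) 0 1 = 0 := by rw [hsum]; rfl
  have h10 : (g 0 • X + g 1 • Y + g 2 • Z) 1 0 = 0 := by rw [hsum]; rfl
  simp only [Matrix.add_apply, Matrix.smul_apply, smul_eq_mul] at h00 h01 h10
  funext j
  fin_cases j <;>
    simp only [Matrix.vecMul, dotProduct, Fin.sum_univ_three, rowsOf,
      Matrix.of_apply, Matrix.cons_val', Matrix.cons_val_zero, Matrix.cons_val_one,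
      Matrix.head_cons, Matrix.cons_val_two, Matrix.tail_cons, Matrix.empty_val',
      Matrix.cons_val_fin_one, Matrix.head_fin_const, Fin.mk_zero, Fin.mk_one,
      Pi.zero_apply]
  · exact h00
  · exact h01
  · exact h10

private lemma dep_of_rows_det_zero (X Y Z : Matrix (Fin 2) (Fin 2) ℂ)
    (hX : X 1 1 = -X 0 0) (hY : Y 1 1 = -Y 0 0) (hZ : Z 1 1 = -Z 0 0)
    (h : (rowsOf X Y Z).det = 0) : ¬ LinearIndependent ℂ ![X, Y, Z] := by
  obtain ⟨v, hv0, hvN⟩ := Matrix.exists_vecMul_eq_zero_iff.mpr h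
  obtain ⟨i, hi⟩ := Function.ne_iff.mp hv0
  refine Fintype.not_linearIndependent_iff.mpr ⟨v, ?_, i, by simpa using hi⟩
  have h0 := congrFun hvN 0
  have h1 := congrFun hvN 1
  have h2 := congrFun hvN 2
  simp only [Matrix.vecMul, dotProduct, Fin.sum_univ_three, rowsOf,
    Matrix.of_apply, Matrix.cons_val', Matrix.cons_val_zero, Matrix.cons_val_one,
    Matrix.head_cons, Matrix.cons_val_two, Matrix.tail_cons, Matrix.empty_val',
    Matrix.cons_val_fin_one, Matrix.head_fin_const, Pi.zero_apply] at h0 h1 h2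
  simp only [Fin.sum_univ_three, Matrix.cons_val_zero, Matrix.cons_val_one,
    Matrix.head_cons, Matrix.cons_val_two, Matrix.tail_cons]
  ext r c
  fin_cases r <;> fin_cases c <;>
    simp only [Matrix.add_apply, Matrix.smul_apply, smul_eq_mul, Matrix.zero_apply,
      Fin.mk_zero, Fin.mk_one]
  · exact h0
  · exact h1
  · exact h2
  · rw [hX, hY, hZ]; linear_combination -h0

private lemma comm2_diag (X Y : Matrix (Fin 2) (Fin 2) ℂ) :
    (comm2 X Y) 1 1 = -((comm2 X Y) 0 0) := by
  simp only [comm2, Matrix.sub_apply, Matrix.mul_apply, Fin.sum_univ_two]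
  ring

private lemma det_identity (a₁ a₂ a₃ b₁ b₂ b₃ : Matrix (Fin 2) (Fin 2) ℂ)
    (ha₁ : a₁ 1 1 = -a₁ 0 0) (ha₂ : a₂ 1 1 = -a₂ 0 0) (ha₃ : a₃ 1 1 = -a₃ 0 0)
    (hb₁ : b₁ 1 1 = -b₁ 0 0) (hb₂ : b₂ 1 1 = -b₂ 0 0) (hb₃ : b₃ 1 1 = -b₃ 0 0) :
    (rowsOf (comm2 (comm2 a₁ a₂) (comm2 b₁ b₂)) (comm2 (comm2 a₁ a₃) (comm2 b₁ b₃))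
        (comm2 (comm2 a₂ a₃) (comm2 b₂ b₃))).det =
      (-16) *
        (a₁ 0 0 * (a₂ 0 1 * a₃ 1 0 - a₂ 1 0 * a₃ 0 1)
          - a₁ 0 1 * (a₂ 0 0 * a₃ 1 0 - a₂ 1 0 * a₃ 0 0)
          + a₁ 1 0 * (a₂ 0 0 * a₃ 0 1 - a₂ 0 1 * a₃ 0 0)) *
        (b₁ 0 0 * (b₂ 0 1 * b₃ 1 0 - b₂ 1 0 * b₃ 0 1)
          - b₁ 0 1 * (b₂ 0 0 * b₃ 1 0 - b₂ 1 0 * b₃ 0 0)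
          + b₁ 1 0 * (b₂ 0 0 * b₃ 0 1 - b₂ 0 1 * b₃ 0 0)) *
        (rowsOf (comm2 a₁ b₁) (comm2 a₂ b₂) (comm2 a₃ b₃)).det := by
  set_option maxHeartbeats 2000000 in
  simp only [rowsOf, Matrix.det_fin_three, comm2, Matrix.sub_apply, Matrix.mul_apply,
    Fin.sum_univ_two, Matrix.of_apply, Matrix.cons_val', Matrix.cons_val_zero,
    Matrix.cons_val_one, Matrix.head_cons, Matrix.cons_val_two, Matrix.tail_cons,
    Matrix.empty_val', Matrix.cons_val_fin_one, Matrix.head_fin_const,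
    ha₁, ha₂, ha₃, hb₁, hb₂, hb₃]
  set_option maxHeartbeats 4000000 in
  ring

private lemma trace_diag (m : Matrix (Fin 2) (Fin 2) ℂ) (h : Matrix.trace m = 0) :
    m 1 1 = -m 0 0 := by
  have : m 0 0 + m 1 1 = 0 := by simpa [Matrix.trace, Fin.sum_univ_two] using h
  linear_combination this

theorem skewer_desargues
    (a₁ a₂ a₃ b₁ b₂ b₃ : Matrix (Fin 2) (Fin 2) ℂ)
    (ha₁ : Matrix.trace a₁ = 0) (ha₂ : Matrix.trace a₂ = 0) (ha₃ : Matrix.trace a₃ = 0)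
    (hb₁ : Matrix.trace b₁ = 0) (hb₂ : Matrix.trace b₂ = 0) (hb₃ : Matrix.trace b₃ = 0)
    (hdep : ¬ LinearIndependent ℂ
      ![a₁ * b₁ - b₁ * a₁, a₂ * b₂ - b₂ * a₂, a₃ * b₃ - b₃ * a₃]) :
    let br : Matrix (Fin 2) (Fin 2) ℂ → Matrix (Fin 2) (Fin 2) ℂ → Matrix (Fin 2) (Fin 2) ℂ :=
      fun X Y => X * Y - Y * X
    ¬ LinearIndependent ℂ
      ![br (br a₁ a₂) (br b₁ b₂), br (br a₁ a₃) (br b₁ b₃), br (br a₂ a₃) (br b₂ b₃)] := by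
  intro br
  show ¬ LinearIndependent ℂ
    ![comm2 (comm2 a₁ a₂) (comm2 b₁ b₂), comm2 (comm2 a₁ a₃) (comm2 b₁ b₃),
      comm2 (comm2 a₂ a₃) (comm2 b₂ b₃)]
  have hdep' : ¬ LinearIndependent ℂ ![comm2 a₁ b₁, comm2 a₂ b₂, comm2 a₃ b₃] := hdep
  have hdetK := rows_det_zero_of_dep _ _ _ hdep'
  have hdetW := det_identity a₁ a₂ a₃ b₁ b₂ b₃ (trace_diag _ ha₁) (trace_diag _ ha₂)
    (trace_diag _ ha₃) (trace_diag _ hb₁) (trace_diag _ hb₂) (trace_diag _ hb₃)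
  rw [hdetK, mul_zero] at hdetW
  exact dep_of_rows_det_zero _ _ _ (comm2_diag _ _) (comm2_diag _ _) (comm2_diag _ _) hdetW
end
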